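/- For every α ≥ 0, 1/(1 + exp(-α)) ≤ 2^(-exp(-α)). -/

import Mathlib

/-! Put `t = exp (-α) ∈ (0, 1]`. The claim is `2 ^ t ≤ 1 + t`, which is Bernoulli's inequality
`(1 + s) ^ t ≤ 1 + t * s` for exponents `t ∈ [0, 1]`, taken at `s = 1`. -/

open Real

theorem two_rpow_le_one_add {t : ℝ} (ht₀ : 0 ≤ t) (ht₁ : t ≤ 1) : (2 : ℝ) ^ t ≤ 1 + t := by
  have h := rpow_one_add_le_one_add_mul_self (s := 1) (by norm_num) ht₀ ht₁
  rwa [one_add_one_eq_two, mul_one] at h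

theorem one_div_one_add_le_two_rpow_neg {t : ℝ} (ht₀ : 0 ≤ t) (ht₁ : t ≤ 1) :
    1 / (1 + t) ≤ (2 : ℝ) ^ (-t) := by
  rw [rpow_neg zero_le_two, one_div]
  exact inv_anti₀ (rpow_pos_of_pos two_pos t) (two_rpow_le_one_add ht₀ ht₁)

theorem logistic_le_rpow (α : ℝ) (hα : 0 ≤ α) :
    1 / (1 + Real.exp (-α)) ≤ (2 : ℝ) ^ (-Real.exp (-α)) :=
  one_div_one_add_le_two_rpow_neg (exp_pos _).le (exp_le_one_iff.mpr (neg_nonpos.mpr hα))
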